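/- arXiv:1907.00871 — 7 statements merged into one kernel-verified Lean document; each statement's English description precedes it below -/
import Mathlib

section
/- Let B be a normal Hausdorff topological space and let {t_U : B → [0,1]}_{U ∈ 𝒰} be a partition of unity subordinate to a locally finite open cover 𝒰 of B (i.e., each t_U is continuous with support contained in U, and the sum over U of t_U equals 1). For each nonempty finite subset F ⊆ 𝒰 define q_F(x) := max(0, min_{U ∈ F} t_U(x) − sup_{U ∉ F} t_U(x)) and V_F := {x ∈ B | q_F(x) > 0}. Then for any two distinct finite subsets E, F ⊆ 𝒰 with the same cardinality, V_E ∩ V_F = ∅. -/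
/-!
At a point `x` of `V E`, every `t_U x` with `U ∈ E` is strictly larger than every `t_U x` with
`U ∈ 𝒰 \ E`, so `E` consists of the indices of the `#E` largest values of `U ↦ t_U x`.
If `x` also lay in `V F` with `#F = #E` and `F ≠ E`, then some `U ∈ E \ F` and `W ∈ F \ E` would
satisfy both `t_W x < t_U x` and `t_U x < t_W x`.
-/

open Set Finset

theorem le_cbiSup {α β : Type*} [ConditionallyCompleteLattice β] {f : α → β} {s : Set α}
    (hf : BddAbove (f '' s)) {a : α} (ha : a ∈ s) : f a ≤ ⨆ b ∈ s, f b :=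
  le_ciSup₂ (f := fun b (_ : b ∈ s) => f b)
    (hf.mono <| iUnion_subset fun _ => range_subset_iff.2 fun hb => mem_image_of_mem f hb) a ha

theorem Summable.bddAbove_image {α : Type*} {f : α → ℝ} {s : Set α}
    (hf : Summable fun a : s => f a) : BddAbove (f '' s) := by
  rw [image_eq_range]
  exact hf.tendsto_cofinite_zero.bddAbove_range_of_cofinite

theorem Finset.exists_mem_notMem_of_card_eq_of_ne {α : Type*} {E F : Finset α}
    (hcard : #E = #F) (hEF : E ≠ F) : ∃ a ∈ E, a ∉ F := by
  by_contra! hsub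
  exact hEF (eq_of_subset_of_card_le hsub hcard.ge)

section Separation

variable {α β : Type*} [ConditionallyCompleteLinearOrder β] {f : α → β} {S : Set α}

theorem lt_of_biSup_sdiff_lt_sInf_image {E : Finset α} (hf : BddAbove (f '' S))
    (hsep : ⨆ b ∈ S \ ↑E, f b < sInf (f '' ↑E)) {a b : α} (ha : a ∈ E) (hb : b ∈ S \ ↑E) :
    f b < f a :=
  calc f b ≤ ⨆ b ∈ S \ ↑E, f b := le_cbiSup (hf.mono (image_mono sdiff_subset)) hb
    _ < sInf (f '' ↑E) := hsep
    _ ≤ f a := csInf_le (E.finite_toSet.image f).bddBelow (mem_image_of_mem f ha)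

theorem eq_of_biSup_sdiff_lt_sInf_image {E F : Finset α} (hf : BddAbove (f '' S))
    (hE : ↑E ⊆ S) (hF : ↑F ⊆ S) (hcard : #E = #F)
    (hEsep : ⨆ b ∈ S \ ↑E, f b < sInf (f '' ↑E)) (hFsep : ⨆ b ∈ S \ ↑F, f b < sInf (f '' ↑F)) :
    E = F := by
  by_contra hEF
  obtain ⟨a, haE, haF⟩ := exists_mem_notMem_of_card_eq_of_ne hcard hEF
  obtain ⟨b, hbF, hbE⟩ := exists_mem_notMem_of_card_eq_of_ne hcard.symm (Ne.symm hEF)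
  exact (lt_of_biSup_sdiff_lt_sInf_image hf hEsep haE ⟨hF hbF, hbE⟩).asymm
    (lt_of_biSup_sdiff_lt_sInf_image hf hFsep hbF ⟨hE haE, haF⟩)

end Separation

theorem stmt_0_general {B : Type*}
    (𝒰 : Set (Set B))
    (t : Set B → B → ℝ)
    (ht_sum : ∀ x, ∑' U : 𝒰, t (U : Set B) x = 1)
    (q : Finset (Set B) → B → ℝ)
    (hq : ∀ F x, q F x =
      max 0 (sInf ((fun U => t U x) '' (F : Set (Set B))) - ⨆ U ∈ 𝒰 \ (F : Set (Set B)), t U x))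
    (V : Finset (Set B) → Set B) (hV : ∀ F, V F = {x | 0 < q F x})
    (E F : Finset (Set B)) (hE : (E : Set (Set B)) ⊆ 𝒰) (hF : (F : Set (Set B)) ⊆ 𝒰)
    (hEF : E ≠ F) (hcard : E.card = F.card) :
    V E ∩ V F = ∅ := by
  ext x
  -- boundedness on `𝒰` keeps the real `⨆` in `q` from collapsing to its junk value `0`
  have hsummable : Summable fun U : 𝒰 => t U x := by
    by_contra h
    exact one_ne_zero ((ht_sum x).symm.trans (tsum_eq_zero_of_not_summable h))
  simp only [mem_inter_iff, hV, mem_ofPred_eq, hq, lt_max_iff, lt_irrefl, false_or, sub_pos,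
    mem_empty_iff_false, iff_false, not_and]
  exact fun hxE hxF =>
    hEF (eq_of_biSup_sdiff_lt_sInf_image hsummable.bddAbove_image hE hF hcard hxE hxF)

theorem stmt_0 {B : Type*} [TopologicalSpace B] [NormalSpace B] [T2Space B]
    (𝒰 : Set (Set B)) (h_open : ∀ U ∈ 𝒰, IsOpen U) (h_cover : ⋃₀ 𝒰 = Set.univ)
    (h_lf : LocallyFinite (fun U : 𝒰 => (U : Set B)))
    (t : Set B → B → ℝ)
    (ht_nonneg : ∀ U x, 0 ≤ t U x)
    (ht_cont : ∀ U ∈ 𝒰, Continuous (t U))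
    (ht_supp : ∀ U ∈ 𝒰, {x | t U x ≠ 0} ⊆ U)
    (ht_sum : ∀ x, ∑' U : 𝒰, t (U : Set B) x = 1)
    (q : Finset (Set B) → B → ℝ)
    (hq : ∀ F x, q F x =
      max 0 (sInf ((fun U => t U x) '' (F : Set (Set B))) - ⨆ U ∈ 𝒰 \ (F : Set (Set B)), t U x))
    (V : Finset (Set B) → Set B) (hV : ∀ F, V F = {x | 0 < q F x})
    (E F : Finset (Set B)) (hE : (E : Set (Set B)) ⊆ 𝒰) (hF : (F : Set (Set B)) ⊆ 𝒰)
    (hEne : E.Nonempty) (hFne : F.Nonempty) (hEF : E ≠ F) (hcard : E.card = F.card) :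
    V E ∩ V F = ∅ :=
  stmt_0_general 𝒰 t ht_sum q hq V hV E F hE hF hEF hcard
end

section
/- Let B be a normal Hausdorff space admitting a locally finite open cover 𝒰 such that every member of 𝒰 satisfies a property Π of open sets, where Π is preserved under passing to open subsets and under arbitrary disjoint unions of open sets. Then B admits a countable locally finite open cover 𝒱 all of whose members satisfy Π. -/
/-!
Take a partition of unity `f` subordinate to `𝒰` and, following Milnor, for each finite set `F`
of indices let `milnorSet F` be the open set of points where the `f i` with `i ∈ F` are positive
and strictly larger than every `f j` with `j ∉ F`. Two such sets with `#F = #G` and `F ≠ G` are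
disjoint, since some `i ∈ F \ G` and `j ∈ G \ F` would satisfy both `f j < f i` and `f i < f j`.
Hence `milnorLayer n`, the union of the `milnorSet F` with `#F = n + 1`, is a disjoint union of open
subsets of members of `𝒰`. Every point `x` lies in `milnorSet F` for `F` the set of indices where
`f · x` is maximal, and a neighbourhood meeting only `N` supports meets only the first `N` layers.
-/

open Set Function

namespace PartitionOfUnity

variable {ι X : Type*} [TopologicalSpace X] {s : Set X} (f : PartitionOfUnity ι X s)

def milnorSet (F : Finset ι) : Set X :=
  {x | ∀ i ∈ F, 0 < f i x ∧ ∀ j ∉ F, f j x < f i x}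

def milnorLayer (n : ℕ) : Set X :=
  ⋃₀ (f.milnorSet '' {F | F.card = n + 1})

theorem milnorSet_subset_support {F : Finset ι} {i : ι} (hi : i ∈ F) :
    f.milnorSet F ⊆ support (f i) :=
  fun _ hx => (hx i hi).1.ne'

theorem isOpen_milnorSet (F : Finset ι) : IsOpen (f.milnorSet F) := by
  -- Where `0 < f i`, a failure `f i ≤ f j` happens inside `tsupport (f j)`, so the failure set
  -- is a locally finite union of closed sets.
  have hclosed (i : ι) :
      IsClosed (⋃ j : {j // j ∉ F}, {x | f i x ≤ f j x} ∩ tsupport (f j)) :=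
    ((f.locallyFinite_tsupport.comp_injective Subtype.val_injective).subset
      fun _ => inter_subset_right).isClosed_iUnion
      fun j => (isClosed_le (f i).continuous (f j).continuous).inter (isClosed_tsupport _)
  have hset (i : ι) : {x | 0 < f i x ∧ ∀ j ∉ F, f j x < f i x} =
      {x | 0 < f i x} \ ⋃ j : {j // j ∉ F}, {x | f i x ≤ f j x} ∩ tsupport (f j) := by
    ext x
    simp only [mem_ofPred_eq, mem_sdiff, mem_iUnion, mem_inter_iff, not_exists, not_and,
      Subtype.forall]
    refine and_congr_right fun hpos => ⟨fun h j hj hle _ => (h j hj).not_ge hle,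
      fun h j hj => lt_of_not_ge fun hle => h j hj hle ?_⟩
    exact subset_tsupport _ (hpos.trans_le hle).ne'
  have : f.milnorSet F = ⋂ i ∈ F, {x | 0 < f i x ∧ ∀ j ∉ F, f j x < f i x} := by
    ext; simp [milnorSet]
  rw [this]
  exact isOpen_biInter_finset fun i _ =>
    hset i ▸ (isOpen_lt continuous_const (f i).continuous).sdiff (hclosed i)

theorem disjoint_milnorSet {F G : Finset ι} (hFG : ¬F ⊆ G) (hGF : ¬G ⊆ F) :
    Disjoint (f.milnorSet F) (f.milnorSet G) := by
  obtain ⟨i, hiF, hiG⟩ := Finset.not_subset.1 hFG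
  obtain ⟨j, hjG, hjF⟩ := Finset.not_subset.1 hGF
  exact disjoint_left.2 fun x hxF hxG =>
    ((hxF i hiF).2 j hjF).not_gt ((hxG j hjG).2 i hiG)

theorem pairwiseDisjoint_milnorSet (n : ℕ) :
    {F : Finset ι | F.card = n}.PairwiseDisjoint f.milnorSet := by
  intro F (hF : F.card = n) G (hG : G.card = n) hne
  exact f.disjoint_milnorSet
    (fun h => hne (Finset.eq_of_subset_of_card_le h (hG.trans hF.symm).le))
    (fun h => hne (Finset.eq_of_subset_of_card_le h (hF.trans hG.symm).le).symm)

theorem exists_mem_milnorSet {x : X} (hx : x ∈ s) :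
    ∃ F : Finset ι, F.Nonempty ∧ x ∈ f.milnorSet F := by
  classical
  obtain ⟨i₀, hi₀⟩ := f.exists_pos hx
  have hT : (f.finsupport x).Nonempty := ⟨i₀, (f.mem_finsupport x).2 hi₀.ne'⟩
  obtain ⟨k, hk, hmax⟩ := (f.finsupport x).exists_max_image (f · x) hT
  have hkpos : 0 < f k x := (f.nonneg k x).lt_of_ne ((f.mem_finsupport x).1 hk).symm
  have hle (j : ι) : f j x ≤ f k x := by
    by_cases hj : j ∈ f.finsupport x
    · exact hmax j hj
    · rw [f.mem_finsupport, mem_support, not_not] at hj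
      exact hj ▸ hkpos.le
  refine ⟨(f.finsupport x).filter (f · x = f k x), ⟨k, Finset.mem_filter.2 ⟨hk, rfl⟩⟩,
    fun i hi => ?_⟩
  rw [(Finset.mem_filter.1 hi).2]
  refine ⟨hkpos, fun j hj => (hle j).lt_of_ne fun hjk => hj (Finset.mem_filter.2 ⟨?_, hjk⟩)⟩
  exact (f.mem_finsupport x).2 (hjk.trans_ne hkpos.ne')

theorem subset_iUnion_milnorLayer : s ⊆ ⋃ n, f.milnorLayer n := by
  intro x hx
  obtain ⟨F, hF, hxF⟩ := f.exists_mem_milnorSet hx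
  refine mem_iUnion.2 ⟨F.card - 1, _, ⟨F, ?_, rfl⟩, hxF⟩
  simp [Nat.sub_add_cancel hF.card_pos]

theorem locallyFinite_milnorLayer : LocallyFinite f.milnorLayer := by
  classical
  intro x
  obtain ⟨N, hN, hfin⟩ := f.locallyFinite x
  refine ⟨N, hN, (finite_lt_nat hfin.toFinset.card).subset ?_⟩
  rintro n ⟨y, ⟨_, ⟨F, hF, rfl⟩, hyF⟩, hyN⟩
  have hsub : F ⊆ hfin.toFinset := fun i hi =>
    hfin.mem_toFinset.2 ⟨y, f.milnorSet_subset_support hi hyF, hyN⟩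
  have := Finset.card_le_card hsub
  simp only [mem_ofPred_eq] at hF ⊢
  omega

end PartitionOfUnity

theorem stmt_1_general {B : Type*} [TopologicalSpace B] [NormalSpace B]
    (P : Set (Set B)) (hP_open : ∀ W ∈ P, IsOpen W)
    (hP_sub : ∀ W ∈ P, ∀ W' ⊆ W, IsOpen W' → W' ∈ P)
    (hP_disj : ∀ S : Set (Set B), S ⊆ P → S.Pairwise Disjoint → ⋃₀ S ∈ P)
    (𝒰 : Set (Set B)) (h𝒰P : 𝒰 ⊆ P) (h_cover : ⋃₀ 𝒰 = Set.univ)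
    (h_lf : LocallyFinite (fun U : 𝒰 => (U : Set B))) :
    ∃ V : ℕ → Set B, (∀ n, V n ∈ P) ∧ (⋃ n, V n) = Set.univ ∧ LocallyFinite V := by
  obtain ⟨f, hf⟩ := PartitionOfUnity.exists_isSubordinate_of_locallyFinite isClosed_univ
    (fun U : 𝒰 => (U : Set B)) (fun U => hP_open U (h𝒰P U.2)) h_lf
    (by rw [← sUnion_eq_iUnion, h_cover])
  have hW : ∀ F : Finset 𝒰, F.Nonempty → f.milnorSet F ∈ P := by
    rintro F ⟨U, hU⟩
    exact hP_sub U (h𝒰P U.2) _ ((f.milnorSet_subset_support hU).trans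
      ((subset_tsupport _).trans (hf U))) (f.isOpen_milnorSet F)
  refine ⟨f.milnorLayer, fun n => hP_disj _ ?_ (f.pairwiseDisjoint_milnorSet _).image,
    univ_subset_iff.1 f.subset_iUnion_milnorLayer, f.locallyFinite_milnorLayer⟩
  rintro _ ⟨F, hF, rfl⟩
  exact hW F (Finset.card_pos.1 (hF.symm ▸ n.succ_pos))

theorem stmt_1 {B : Type*} [TopologicalSpace B] [NormalSpace B] [T2Space B]
    (P : Set (Set B)) (hP_open : ∀ W ∈ P, IsOpen W)
    (hP_sub : ∀ W ∈ P, ∀ W' ⊆ W, IsOpen W' → W' ∈ P)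
    (hP_disj : ∀ S : Set (Set B), S ⊆ P → S.Pairwise Disjoint → ⋃₀ S ∈ P)
    (𝒰 : Set (Set B)) (h𝒰P : 𝒰 ⊆ P) (h_cover : ⋃₀ 𝒰 = Set.univ)
    (h_lf : LocallyFinite (fun U : 𝒰 => (U : Set B))) :
    ∃ V : ℕ → Set B, (∀ n, V n ∈ P) ∧ (⋃ n, V n) = Set.univ ∧ LocallyFinite V :=
  stmt_1_general P hP_open hP_sub hP_disj 𝒰 h𝒰P h_cover h_lf
end

section
/- Let V be a normed real vector space. The map ι : CV → V ⊕ ℝ defined by ι([x,t]) = (t·x/(1 + ‖x‖), t) is a topological embedding of the coarse cone CV (with the coarse cone topology/metric) into V ⊕ ℝ with the sup norm ‖(v,r)‖ = max(‖v‖, |r|), and its image is a convex subset of V ⊕ ℝ. -/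
section aux
set_option linter.unusedSectionVars false
set_option maxHeartbeats 800000
variable {V : Type*} [NormedAddCommGroup V] [NormedSpace ℝ V]

noncomputable def fco (x : V) : V := (1 + ‖x‖)⁻¹ • x

lemma one_add_norm_pos (x : V) : (0:ℝ) < 1 + ‖x‖ := by positivity

lemma norm_fco (x : V) : ‖fco x‖ * (1 + ‖x‖) = ‖x‖ := by
  have h := one_add_norm_pos x
  rw [fco, norm_smul, norm_inv, Real.norm_eq_abs, abs_of_pos h]
  field_simp

lemma norm_fco_lt_one (x : V) : ‖fco x‖ < 1 := by
  have h := one_add_norm_pos x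
  nlinarith [norm_fco x, norm_nonneg x]

lemma smul_fco (x : V) : (1 + ‖x‖) • fco x = x := by
  rw [fco, smul_smul, mul_inv_cancel₀ (one_add_norm_pos x).ne', one_smul]

lemma fco_lower (x y : V) : ‖x - y‖ ≤ (1 + ‖x‖) * (1 + ‖y‖) * ‖fco x - fco y‖ := by
  have hx := one_add_norm_pos x
  have hy := one_add_norm_pos y
  have h1 : x - y = (1 + ‖x‖) • (fco x - fco y) + (‖x‖ - ‖y‖) • fco y := by
    have : (1 + ‖x‖) • (fco x - fco y) + (‖x‖ - ‖y‖) • fco y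
        = (1 + ‖x‖) • fco x - (1 + ‖y‖) • fco y := by module
    rw [this, smul_fco, smul_fco]
  have h2 : ‖x - y‖ ≤ (1 + ‖x‖) * ‖fco x - fco y‖ + |‖x‖ - ‖y‖| * ‖fco y‖ := by
    calc ‖x - y‖ = ‖(1 + ‖x‖) • (fco x - fco y) + (‖x‖ - ‖y‖) • fco y‖ := by rw [← h1]
      _ ≤ ‖(1 + ‖x‖) • (fco x - fco y)‖ + ‖(‖x‖ - ‖y‖) • fco y‖ := norm_add_le _ _
      _ = (1 + ‖x‖) * ‖fco x - fco y‖ + |‖x‖ - ‖y‖| * ‖fco y‖ := by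
          rw [norm_smul, norm_smul, Real.norm_eq_abs, Real.norm_eq_abs, abs_of_pos hx]
  have h3 : |‖x‖ - ‖y‖| ≤ ‖x - y‖ := abs_norm_sub_norm_le x y
  have h4 := norm_fco y
  nlinarith [norm_nonneg (fco y), norm_nonneg (x - y), norm_nonneg (fco x - fco y),
    mul_le_mul_of_nonneg_right h3 (norm_nonneg (fco y)), abs_nonneg (‖x‖ - ‖y‖)]

lemma key_lower (x y : V) (s t δ : ℝ) (ht0 : 0 ≤ t) (hδpos : 0 < δ)
    (hδ : δ ≤ s / (4 * (1 + ‖x‖)))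
    (h1 : ‖t • fco y - s • fco x‖ < δ) (h2 : |t - s| < δ) :
    |t - s| + min t s * ‖y - x‖ < δ + 4 * (1 + ‖x‖) ^ 2 * δ := by
  set A := 1 + ‖x‖ with hA
  have hApos : 0 < A := one_add_norm_pos x
  have hA1 : 1 ≤ A := by nlinarith [norm_nonneg x]
  have haA : ‖fco x‖ * A = ‖x‖ := norm_fco x
  have hax : ‖fco x‖ < 1 := norm_fco_lt_one x
  have h1a : (1 - ‖fco x‖) * A = 1 := by nlinarith [haA]
  have hs : 4 * A * δ ≤ s := by
    have := (le_div_iff₀ (by positivity : (0:ℝ) < 4 * A)).mp hδ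
    linarith
  have habs := abs_lt.mp h2
  have htpos : 0 < t := by nlinarith
  have hb1 : t * ‖fco y‖ ≤ s * ‖fco x‖ + δ := by
    have hn := norm_sub_norm_le (t • fco y) (s • fco x)
    rw [norm_smul, norm_smul, Real.norm_eq_abs, Real.norm_eq_abs, abs_of_nonneg ht0,
      abs_of_nonneg (by nlinarith : (0:ℝ) ≤ s)] at hn
    linarith
  have h1minv : (1 - ‖fco x‖) = A⁻¹ := eq_inv_of_mul_eq_one_left h1a
  have h5 : 4 * δ ≤ s * (1 - ‖fco x‖) := by
    rw [h1minv, ← div_eq_mul_inv, le_div_iff₀ hApos]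
    linarith
  have h4 : 2 * (s * ‖fco x‖ + δ) ≤ (1 + ‖fco x‖) * (s - δ) := by
    nlinarith [h5, hax.le, hδpos, norm_nonneg (fco x)]
  have hfy : 2 * ‖fco y‖ ≤ 1 + ‖fco x‖ := by
    have h6 : 2 * (t * ‖fco y‖) ≤ (1 + ‖fco x‖) * t := by
      nlinarith [hb1, h4, habs.1, norm_nonneg (fco x)]
    nlinarith [h6, htpos]
  have hBy : 1 + ‖y‖ ≤ 2 * A := by
    have hB1 : (1 - ‖fco y‖) * (1 + ‖y‖) = 1 := by nlinarith [norm_fco y]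
    have hBpos : (0:ℝ) < 1 + ‖y‖ := one_add_norm_pos y
    have step1 : (1 - ‖fco x‖) * (1 + ‖y‖) ≤ 2 := by
      nlinarith [mul_le_mul_of_nonneg_right
        (by linarith : 1 - ‖fco x‖ ≤ 2 * (1 - ‖fco y‖)) hBpos.le, hB1]
    calc 1 + ‖y‖ = ((1 - ‖fco x‖) * A) * (1 + ‖y‖) := by rw [h1a, one_mul]
      _ = (1 - ‖fco x‖) * (1 + ‖y‖) * A := by ring
      _ ≤ 2 * A := mul_le_mul_of_nonneg_right step1 hApos.le
  have hd2 : t * ‖fco x - fco y‖ < 2 * δ := by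
    have hid : t • (fco x - fco y) = (s • fco x - t • fco y) + (t - s) • fco x := by module
    have hn : ‖t • (fco x - fco y)‖ ≤ ‖s • fco x - t • fco y‖ + |t - s| * ‖fco x‖ := by
      rw [hid]
      refine (norm_add_le _ _).trans ?_
      rw [norm_smul, Real.norm_eq_abs]
    rw [norm_smul, Real.norm_eq_abs, abs_of_nonneg ht0] at hn
    have h1' : ‖s • fco x - t • fco y‖ < δ := by rw [norm_sub_rev]; exact h1
    have ha2 : |t - s| * ‖fco x‖ ≤ δ := by
      nlinarith [abs_nonneg (t - s), norm_nonneg (fco x), hax.le, h2.le]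
    linarith
  have hfin : t * ‖y - x‖ ≤ 4 * A ^ 2 * δ := by
    have hl := fco_lower y x
    have s1 : t * ‖y - x‖ ≤ (1 + ‖y‖) * A * (t * ‖fco x - fco y‖) := by
      calc t * ‖y - x‖ ≤ t * ((1 + ‖y‖) * (1 + ‖x‖) * ‖fco y - fco x‖) :=
            mul_le_mul_of_nonneg_left hl ht0
        _ = (1 + ‖y‖) * A * (t * ‖fco x - fco y‖) := by rw [norm_sub_rev]; ring
    have s2 : (1 + ‖y‖) * A * (t * ‖fco x - fco y‖) ≤ (2 * A) * A * (2 * δ) := by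
      have e1 : (1 + ‖y‖) * A ≤ (2 * A) * A :=
        mul_le_mul_of_nonneg_right hBy hApos.le
      exact mul_le_mul e1 hd2.le (mul_nonneg ht0 (norm_nonneg _)) (by positivity)
    calc t * ‖y - x‖ ≤ (2 * A) * A * (2 * δ) := s1.trans s2
      _ = 4 * A ^ 2 * δ := by ring
  have hmin : min t s * ‖y - x‖ ≤ 4 * A ^ 2 * δ := by
    calc min t s * ‖y - x‖ ≤ t * ‖y - x‖ :=
          mul_le_mul_of_nonneg_right (min_le_left _ _) (norm_nonneg _)
      _ ≤ _ := hfin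
  linarith

lemma fco_lip (x y : V) : ‖fco x - fco y‖ ≤ 2 * ‖x - y‖ := by
  have hx := one_add_norm_pos x
  have hy := one_add_norm_pos y
  have h1 : fco x - fco y = (1 + ‖x‖)⁻¹ • (x - y) + ((1 + ‖x‖)⁻¹ - (1 + ‖y‖)⁻¹) • y := by
    rw [fco, fco]; module
  have h2 : (1 + ‖x‖)⁻¹ - (1 + ‖y‖)⁻¹ = (‖y‖ - ‖x‖) / ((1 + ‖x‖) * (1 + ‖y‖)) := by
    field_simp
    ring
  have h3 : |‖y‖ - ‖x‖| ≤ ‖x - y‖ := by rw [abs_sub_comm]; exact abs_norm_sub_norm_le x y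
  have hD : (0:ℝ) < (1 + ‖x‖) * (1 + ‖y‖) := by positivity
  have step : ‖fco x - fco y‖ ≤ (1 + ‖x‖)⁻¹ * ‖x - y‖ + |(1 + ‖x‖)⁻¹ - (1 + ‖y‖)⁻¹| * ‖y‖ := by
    rw [h1]
    refine (norm_add_le _ _).trans ?_
    rw [norm_smul, norm_smul, Real.norm_eq_abs, Real.norm_eq_abs, abs_of_pos (by positivity)]
  have e1 : (1 + ‖x‖)⁻¹ * ‖x - y‖ ≤ ‖x - y‖ := by
    rw [inv_mul_le_iff₀ hx]
    nlinarith [norm_nonneg (x - y), norm_nonneg x]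
  have e2 : |(1 + ‖x‖)⁻¹ - (1 + ‖y‖)⁻¹| * ‖y‖ ≤ ‖x - y‖ := by
    rw [h2, abs_div, abs_of_pos hD, div_mul_eq_mul_div, div_le_iff₀ hD]
    have hb : ‖y‖ ≤ (1 + ‖x‖) * (1 + ‖y‖) := by nlinarith [norm_nonneg x, norm_nonneg y]
    exact mul_le_mul h3 hb (norm_nonneg y) (norm_nonneg (x - y))
  linarith

lemma key_upper (x y : V) (s t : ℝ) (hs : 0 ≤ s) (ht : 0 ≤ t) :
    ‖s • fco x - t • fco y‖ ≤ |s - t| + 2 * (min s t * ‖x - y‖) := by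
  have hlx := (norm_fco_lt_one x).le
  have hly := (norm_fco_lt_one y).le
  have hlip := fco_lip x y
  rcases le_total s t with h | h
  · have h1 : s • fco x - t • fco y = s • (fco x - fco y) + (s - t) • fco y := by module
    rw [h1, min_eq_left h]
    refine (norm_add_le _ _).trans ?_
    rw [norm_smul, norm_smul, Real.norm_eq_abs, Real.norm_eq_abs, abs_of_nonneg hs]
    nlinarith [norm_nonneg (fco y), abs_nonneg (s - t), norm_nonneg (x - y),
      norm_nonneg (fco x - fco y)]
  · have h1 : s • fco x - t • fco y = t • (fco x - fco y) + (s - t) • fco x := by module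
    rw [h1, min_eq_right h]
    refine (norm_add_le _ _).trans ?_
    rw [norm_smul, norm_smul, Real.norm_eq_abs, Real.norm_eq_abs, abs_of_nonneg ht]
    nlinarith [norm_nonneg (fco x), abs_nonneg (s - t), norm_nonneg (x - y),
      norm_nonneg (fco x - fco y)]

lemma fco_surj {u : V} (hu : ‖u‖ < 1) : fco ((1 - ‖u‖)⁻¹ • u) = u := by
  have h1 : (0:ℝ) < 1 - ‖u‖ := by linarith
  have hnx : ‖(1 - ‖u‖)⁻¹ • u‖ = (1 - ‖u‖)⁻¹ * ‖u‖ := by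
    rw [norm_smul, norm_inv, Real.norm_eq_abs, abs_of_pos h1]
  rw [fco, hnx]
  have h2 : (1 + (1 - ‖u‖)⁻¹ * ‖u‖) = (1 - ‖u‖)⁻¹ := by field_simp; ring
  rw [h2, inv_inv, smul_smul, mul_inv_cancel₀ h1.ne', one_smul]

end aux

open scoped Topology

theorem stmt_4 {V C : Type*} [NormedAddCommGroup V] [NormedSpace ℝ V] [MetricSpace C]
    (mk : V × unitInterval → C) (hsurj : Function.Surjective mk)
    (hdist : ∀ p q : V × unitInterval,
      dist (mk p) (mk q) = |(p.2 : ℝ) - (q.2 : ℝ)| + min (p.2 : ℝ) (q.2 : ℝ) * dist p.1 q.1)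
    (ι : C → V × ℝ)
    (hι : ∀ (x : V) (t : unitInterval),
      ι (mk (x, t)) = (((t : ℝ) * (1 + ‖x‖)⁻¹) • x, (t : ℝ))) :
    Topology.IsEmbedding ι ∧ Convex ℝ (Set.range ι) := by
  have hι' : ∀ (x : V) (t : unitInterval), ι (mk (x, t)) = ((t : ℝ) • fco x, (t : ℝ)) := by
    intro x t
    rw [hι]
    congr 1
    rw [fco, smul_smul]
  have hd : ∀ (x y : V) (s t : unitInterval),
      dist (ι (mk (x, s))) (ι (mk (y, t)))
        = max ‖(s : ℝ) • fco x - (t : ℝ) • fco y‖ |(s : ℝ) - (t : ℝ)| := by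
    intro x y s t
    rw [hι' x s, hι' y t, Prod.dist_eq]
    simp [dist_eq_norm, Real.dist_eq]
  have lip : ∀ c c' : C, dist (ι c) (ι c') ≤ 2 * dist c c' := by
    intro c c'
    obtain ⟨⟨x, s⟩, rfl⟩ := hsurj c
    obtain ⟨⟨y, t⟩, rfl⟩ := hsurj c'
    rw [hd, hdist]
    simp only [dist_eq_norm]
    have h1 := key_upper x y (s : ℝ) (t : ℝ) s.2.1 t.2.1
    have h2 : (0:ℝ) ≤ min (s : ℝ) (t : ℝ) * ‖x - y‖ :=
      mul_nonneg (le_min s.2.1 t.2.1) (norm_nonneg _)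
    exact max_le (by linarith [abs_nonneg ((s:ℝ) - (t:ℝ))])
      (by linarith [abs_nonneg ((s:ℝ) - (t:ℝ))])
  have key : ∀ c : C, ∀ ε > (0:ℝ), ∃ δ > (0:ℝ), ∀ c', dist (ι c') (ι c) < δ → dist c' c < ε := by
    intro c ε hε
    obtain ⟨⟨x, s⟩, rfl⟩ := hsurj c
    rcases eq_or_lt_of_le s.2.1 with hs0 | hs0
    · refine ⟨ε, hε, ?_⟩
      intro c' h
      obtain ⟨⟨y, t⟩, rfl⟩ := hsurj c'
      rw [hd y x t s] at h
      have h2 : |(t : ℝ) - (s : ℝ)| < ε := lt_of_le_of_lt (le_max_right _ _) h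
      have hmin : min (t : ℝ) (s : ℝ) = (s : ℝ) := min_eq_right (by rw [← hs0]; exact t.2.1)
      rw [hdist, hmin, ← hs0, zero_mul, add_zero]
      rw [← hs0] at h2
      exact h2
    · set A := 1 + ‖x‖ with hA
      have hApos : (0:ℝ) < A := one_add_norm_pos x
      set δ := min ((s : ℝ) / (4 * A)) (ε / (1 + 4 * A ^ 2)) with hδdef
      have hδpos : 0 < δ := lt_min (by positivity) (by positivity)
      refine ⟨δ, hδpos, ?_⟩
      intro c' h
      obtain ⟨⟨y, t⟩, rfl⟩ := hsurj c'
      rw [hdist]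
      rw [hd y x t s] at h
      have h1 : ‖(t : ℝ) • fco y - (s : ℝ) • fco x‖ < δ := lt_of_le_of_lt (le_max_left _ _) h
      have h2 : |(t : ℝ) - (s : ℝ)| < δ := lt_of_le_of_lt (le_max_right _ _) h
      have hkl := key_lower x y (s : ℝ) (t : ℝ) δ t.2.1 hδpos (min_le_left _ _) h1 h2
      have hδε : δ * (1 + 4 * A ^ 2) ≤ ε := by
        have := min_le_right ((s : ℝ) / (4 * A)) (ε / (1 + 4 * A ^ 2))
        rw [← le_div_iff₀ (by positivity : (0:ℝ) < 1 + 4 * A ^ 2)]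
        exact this
      simp only [dist_eq_norm]
      calc |(t : ℝ) - (s : ℝ)| + min (t : ℝ) (s : ℝ) * ‖y - x‖
          < δ + 4 * A ^ 2 * δ := hkl
        _ = δ * (1 + 4 * A ^ 2) := by ring
        _ ≤ ε := hδε
  have hinj : Function.Injective ι := by
    intro c c' h
    have hlt : ∀ ε > (0:ℝ), dist c c' < ε := by
      intro ε hε
      obtain ⟨δ, hδ, hk⟩ := key c' ε hε
      apply hk
      rw [h]
      simpa using hδ
    have h0 : dist c c' ≤ 0 := by
      by_contra h'
      push_neg at h'
      exact absurd (hlt _ h') (lt_irrefl _)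
    exact eq_of_dist_eq_zero (le_antisymm h0 dist_nonneg)
  have hcont : Continuous ι := by
    rw [Metric.continuous_iff]
    intro b ε hε
    exact ⟨ε / 2, by positivity, fun a ha => lt_of_le_of_lt (lip a b) (by linarith)⟩
  have hemb : Topology.IsEmbedding ι := by
    refine ⟨Topology.isInducing_iff_nhds.mpr fun c => ?_, hinj⟩
    refine le_antisymm (Filter.tendsto_iff_comap.mp hcont.continuousAt) ?_
    refine ((Metric.nhds_basis_ball.comap ι).le_basis_iff Metric.nhds_basis_ball).mpr ?_
    intro ε hε
    obtain ⟨δ, hδ, hk⟩ := key c ε hε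
    exact ⟨δ, hδ, fun c' hc' => hk c' (Metric.mem_ball.mp hc')⟩
  refine ⟨hemb, ?_⟩
  have hrange : Set.range ι = {p : V × ℝ | (‖p.1‖ < p.2 ∧ p.2 ≤ 1) ∨ p = 0} := by
    ext p
    constructor
    · rintro ⟨c, rfl⟩
      obtain ⟨⟨x, t⟩, rfl⟩ := hsurj c
      rw [hι']
      simp only [Set.mem_setOf_eq]
      rcases eq_or_lt_of_le t.2.1 with h0 | h0
      · right
        simp [← h0]
      · left
        refine ⟨?_, t.2.2⟩
        simp only [norm_smul, Real.norm_eq_abs, abs_of_pos h0]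
        nlinarith [norm_fco_lt_one x]
    · obtain ⟨v, r⟩ := p
      rintro (⟨h1, h2⟩ | h0)
      · simp only at h1 h2
        have hr : 0 < r := lt_of_le_of_lt (norm_nonneg v) h1
        have hu : ‖r⁻¹ • v‖ < 1 := by
          rw [norm_smul, norm_inv, Real.norm_eq_abs, abs_of_pos hr]
          rw [inv_mul_lt_iff₀ hr, mul_one]
          exact h1
        refine ⟨mk ((1 - ‖r⁻¹ • v‖)⁻¹ • (r⁻¹ • v), ⟨r, hr.le, h2⟩), ?_⟩
        rw [hι', fco_surj hu]
        simp only [smul_smul]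
        rw [mul_inv_cancel₀ hr.ne', one_smul]
      · obtain ⟨hv, hr⟩ := Prod.mk_eq_zero.mp h0
        subst hv; subst hr
        refine ⟨mk (0, 0), ?_⟩
        rw [hι']
        simp
  rw [hrange]
  rintro ⟨v, r⟩ hp ⟨w, q⟩ hq a b ha hb hab
  simp only [Set.mem_setOf_eq, Prod.smul_mk, Prod.mk_add_mk, smul_eq_mul, Prod.mk_eq_zero,
    smul_eq_zero] at hp hq ⊢
  rcases hp with ⟨hp1, hp2⟩ | ⟨hp1, hp2⟩
  · rcases hq with ⟨hq1, hq2⟩ | ⟨hq1, hq2⟩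
    · left
      constructor
      · have hn : ‖a • v + b • w‖ ≤ a * ‖v‖ + b * ‖w‖ := by
          refine (norm_add_le _ _).trans ?_
          rw [norm_smul, norm_smul, Real.norm_eq_abs, Real.norm_eq_abs,
            abs_of_nonneg ha, abs_of_nonneg hb]
        have hstrict : a * ‖v‖ + b * ‖w‖ < a * r + b * q := by
          rcases lt_or_ge 0 a with ha' | ha'
          · nlinarith
          · have ha0 : a = 0 := le_antisymm ha' ha
            have hb1 : b = 1 := by linarith
            rw [ha0, hb1]
            simpa using hq1
        linarith
      · nlinarith
    · subst hq1; subst hq2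
      rcases lt_or_ge 0 a with ha' | ha'
      · left
        constructor
        · rw [smul_zero, add_zero, norm_smul, Real.norm_eq_abs, abs_of_pos ha']
          nlinarith
        · nlinarith
      · right
        have ha0 : a = 0 := le_antisymm ha' ha
        rw [ha0]
        simp
  · subst hp1; subst hp2
    rcases hq with ⟨hq1, hq2⟩ | ⟨hq1, hq2⟩
    · rcases lt_or_ge 0 b with hb' | hb'
      · left
        constructor
        · rw [smul_zero, zero_add, norm_smul, Real.norm_eq_abs, abs_of_pos hb']
          nlinarith
        · nlinarith
      · right
        have hb0 : b = 0 := le_antisymm hb' hb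
        rw [hb0]
        simp
    · subst hq1; subst hq2
      right
      simp
end

section
/- In the Baumslag–Solitar group G = BS(1,4) = ⟨x, y | y x y^{-1} = x^4⟩, the subgroups H = ⟨x⟩ and K = ⟨x²⟩ satisfy: H contains a conjugate of K, and K contains a conjugate of H, but H and K are not equal (indeed not conjugate). Hence the subconjugacy preorder on subgroups of G is not antisymmetric. -/
/-- The single relator `y x y⁻¹ x⁻⁴` of the Baumslag–Solitar group `BS(1,4)`,
with `x` the generator `0` and `y` the generator `1`. -/
def bsRels : Set (FreeGroup (Fin 2)) :=
  {FreeGroup.of 1 * FreeGroup.of 0 * (FreeGroup.of 1)⁻¹ * (FreeGroup.of 0 ^ 4)⁻¹}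

/-!
The two subconjugacies come from `x² ∈ ⟨x⟩` and `y x y⁻¹ = x⁴ ∈ ⟨x²⟩`. For the non-conjugacy,
represent `BS(1,4)` by affine maps of `ℚ`: `x ↦ (t ↦ t + 1)`, `y ↦ (t ↦ 4t)`. Every element
then has slope `4 ^ k` for some `k : ℤ`, so conjugating `⟨x⟩` gives the translations by
`4 ^ k ℤ`, while `⟨x²⟩` gives the translations by `2ℤ`; equality would force `4 ^ k = ±2`.
-/

open SemidirectProduct Subgroup Multiplicative

theorem SemidirectProduct.mul_inl_mul_inv {N G : Type*} [CommGroup N] [Group G]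
    {φ : G →* MulAut N} (a : N ⋊[φ] G) (n : N) : a * inl n * a⁻¹ = inl (φ a.right n) := by
  ext <;> simp [mul_comm]

theorem Subgroup.conj_mem_of_mem_zpowers {G : Type*} [Group G] {K : Subgroup G} {x y z : G}
    (h : y * x * y⁻¹ ∈ K) (hz : z ∈ zpowers x) : y * z * y⁻¹ ∈ K := by
  obtain ⟨n, rfl⟩ := hz
  simpa only [conj_zpow] using zpow_mem h n

theorem four_zpow_ne_two (k : ℤ) : (4 : ℚ) ^ k ≠ 2 := by
  intro h
  have h2 : (2 : ℚ) ^ (2 * k) = 2 ^ (1 : ℤ) := by rw [zpow_mul]; norm_num [h]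
  have := zpow_right_injective₀ (by norm_num : (0 : ℚ) < 2) (by norm_num) h2
  omega

namespace BaumslagSolitar

def lift {G : Type*} [Group G] {a b : G} (h : b * a * b⁻¹ = a ^ 4) :
    PresentedGroup bsRels →* G :=
  PresentedGroup.toGroup (f := ![a, b]) (by rintro r rfl; simp [h])

theorem lift_of_zero {G : Type*} [Group G] {a b : G} (h : b * a * b⁻¹ = a ^ 4) :
    lift h (.of 0) = a :=
  PresentedGroup.toGroup.of _

theorem conj_of_zero : (.of 1 * .of 0 * (.of 1)⁻¹ : PresentedGroup bsRels) = .of 0 ^ 4 :=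
  PresentedGroup.mk_eq_mk_of_mul_inv_mem rfl

def scaleByFourPow : Multiplicative ℤ →* MulAut (Multiplicative ℚ) :=
  (MulAutMultiplicative ℚ).symm.toMonoidHom.comp
    (AddAut.mulLeft.comp (zpowersHom ℚˣ (Units.mk0 4 four_ne_zero)))

theorem scaleByFourPow_apply (k : Multiplicative ℤ) (q : ℚ) :
    scaleByFourPow k (ofAdd q) = ofAdd (4 ^ k.toAdd * q) := by
  change ofAdd ((Units.mk0 (4 : ℚ) four_ne_zero ^ k.toAdd : ℚˣ) • q) = _
  simp [Units.smul_def]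

/-- The group of affine maps `t ↦ 4 ^ k * t + q` of `ℚ`, written as pairs `(q, k)`. -/
abbrev Affine := Multiplicative ℚ ⋊[scaleByFourPow] Multiplicative ℤ

theorem affine_rel :
    (inr (ofAdd 1) : Affine) * inl (ofAdd 1) * (inr (ofAdd 1))⁻¹ = inl (ofAdd 1) ^ 4 := by
  rw [mul_inl_mul_inv, scaleByFourPow_apply, ← map_pow, ← ofAdd_nsmul]
  norm_num

def rep : PresentedGroup bsRels →* Affine := lift affine_rel

theorem rep_conj (g : PresentedGroup bsRels) :
    rep (g * .of 0 * g⁻¹) = inl (ofAdd (4 ^ (rep g).right.toAdd)) := by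
  rw [map_mul, map_mul, map_inv, rep, lift_of_zero, mul_inl_mul_inv, scaleByFourPow_apply,
    mul_one]

theorem rep_sq : rep (.of 0 ^ 2) = inl (ofAdd 2) := by
  rw [map_pow, rep, lift_of_zero, ← map_pow, ← ofAdd_nsmul]
  norm_num

theorem not_isOfFinOrder_inl {q : ℚ} (hq : q ≠ 0) : ¬IsOfFinOrder (inl (ofAdd q) : Affine) := by
  rw [inl_injective.isOfFinOrder_iff, isOfFinOrder_iff_eq_one]
  simpa using hq

theorem map_conj_zpowers_ne_zpowers_sq (g : PresentedGroup bsRels) :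
    map (MulAut.conj g).toMonoidHom (zpowers (.of 0)) ≠ zpowers (.of 0 ^ 2) := by
  intro h
  have h' := congrArg (map rep) h
  rw [MonoidHom.map_zpowers, MonoidHom.map_zpowers, MonoidHom.map_zpowers,
    MulEquiv.coe_toMonoidHom, MulAut.conj_apply, rep_conj, rep_sq, eq_comm,
    zpowers_eq_zpowers_iff (not_isOfFinOrder_inl two_ne_zero)] at h'
  rcases h' with h' | h'
  · simp only [inl_injective.eq_iff, ofAdd.injective.eq_iff] at h'
    exact four_zpow_ne_two _ h'.symm
  · simp only [← map_inv, ← ofAdd_neg, inl_injective.eq_iff, ofAdd.injective.eq_iff] at h'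
    have : (0 : ℚ) < 4 ^ (rep g).right.toAdd := by positivity
    linarith

end BaumslagSolitar

open BaumslagSolitar in
theorem stmt_8 :
    let x : PresentedGroup bsRels := PresentedGroup.of 0
    let Hs : Subgroup (PresentedGroup bsRels) := Subgroup.zpowers x
    let Ks : Subgroup (PresentedGroup bsRels) := Subgroup.zpowers (x ^ 2)
    (∃ g : PresentedGroup bsRels, ∀ k ∈ Ks, g * k * g⁻¹ ∈ Hs) ∧
    (∃ g : PresentedGroup bsRels, ∀ h ∈ Hs, g * h * g⁻¹ ∈ Ks) ∧
    Hs ≠ Ks ∧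
    ¬ ∃ g : PresentedGroup bsRels, Subgroup.map (MulAut.conj g).toMonoidHom Hs = Ks := by
  intro x Hs Ks
  have not_conj : ¬∃ g, map (MulAut.conj g).toMonoidHom Hs = Ks :=
    fun ⟨g, hg⟩ ↦ map_conj_zpowers_ne_zpowers_sq g hg
  refine ⟨⟨1, fun _ ↦ conj_mem_of_mem_zpowers ?_⟩, ⟨.of 1, fun _ ↦ conj_mem_of_mem_zpowers ?_⟩,
    fun h ↦ not_conj ⟨1, by rw [map_one]; exact (map_id Hs).trans h⟩, not_conj⟩
  · simpa only [one_mul, inv_one, mul_one] using pow_mem (mem_zpowers x) 2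
  · rw [conj_of_zero]
    exact ⟨2, by simp [x, ← pow_mul]⟩
end

section
/- Let p : E → X be a fiber bundle with fiber F over a paracompact Hausdorff space X, and suppose F is an absolute extensor for the class of all spaces appearing as closed subsets of X (e.g., F is a contractible ANR and X is metrizable). Then for any closed subset A ⊆ X, every continuous section of p defined over A extends to a continuous section over all of X. -/
/-!
Shrink a locally finite trivializing cover to closed sets `w i`. Over a single closed set `W`
inside a trivializing open set, a section over a closed set `C` is a map `C ∩ W → F`, which
extends over `W` because `F` is an extensor for `W`; pasting along the closed sets `C` and `W`
extends the section over `C ∪ W`. Zorn's lemma applied to sections over the sets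
`A ∪ ⋃ i ∈ S, w i` then gives a section over all of `X`: by local finiteness, near each point
the union of a chain of such domains agrees with a single member of the chain, so the glued
section stays continuous.
-/

open Set Topology Function

section

variable {X Z : Type*} [TopologicalSpace X] [TopologicalSpace Z]

theorem exists_locallyFinite_closed_refinement [ParacompactSpace X] [T2Space X] {ι : Type*}
    {u : ι → Set X} (huo : ∀ i, IsOpen (u i)) (hcov : ⋃ i, u i = univ) :
    ∃ w : ι → Set X, LocallyFinite w ∧ (∀ i, IsClosed (w i)) ∧ (∀ i, w i ⊆ u i) ∧
      ⋃ i, w i = univ := by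
  obtain ⟨v, hvo, hvcov, hvlf, hvu⟩ := precise_refinement u huo hcov
  obtain ⟨w, hwcov, hwc, hwv⟩ :=
    exists_iUnion_eq_closed_subset hvo (fun x => hvlf.point_finite x) hvcov
  exact ⟨w, hvlf.subset hwv, hwc, fun i => (hwv i).trans (hvu i), hwcov⟩

theorem LocallyFinite.exists_isOpen_inter_biUnion_subset {ι κ : Type*} {w : ι → Set X}
    (hw : LocallyFinite w) {S : κ → Set ι} {c : Set κ} (hc : c.Nonempty)
    (hdir : DirectedOn (fun k l => S k ⊆ S l) c) (x : X) :
    ∃ t, IsOpen t ∧ x ∈ t ∧ ∃ k ∈ c, t ∩ ⋃ i ∈ ⋃ k ∈ c, S k, w i ⊆ ⋃ i ∈ S k, w i := by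
  obtain ⟨n, hn, hfin⟩ := hw x
  obtain ⟨t, htn, hto, hxt⟩ := mem_nhds_iff.1 hn
  have hT : {i | i ∈ ⋃ k ∈ c, S k ∧ (w i ∩ n).Nonempty}.Finite :=
    hfin.subset fun i hi => hi.2
  obtain ⟨k, hkc, hTk⟩ := hdir.exists_mem_subset_of_finset_subset_biUnion hc
    (s := hT.toFinset) (by rw [hT.coe_toFinset]; exact fun i hi => hi.1)
  refine ⟨t, hto, hxt, k, hkc, ?_⟩
  rintro y ⟨hyt, hy⟩
  obtain ⟨i, hi, hyi⟩ := mem_iUnion₂.1 hy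
  have hiT : i ∈ (hT.toFinset : Set ι) := by
    rw [hT.coe_toFinset]
    exact ⟨hi, y, hyi, htn hyt⟩
  exact mem_biUnion (hTk hiT) hyi

def IsSectionOn (p : Z → X) (σ : X → Z) (C : Set X) : Prop :=
  ContinuousOn σ C ∧ ∀ x ∈ C, p (σ x) = x

theorem IsSectionOn.exists_extend_union {p : Z → X} {σ : X → Z} {C W : Set X}
    (hσ : IsSectionOn p σ C) (hC : IsClosed C) (hW : IsClosed W) {τ : W → Z}
    (hτ : Continuous τ) (hpτ : ∀ x, p (τ x) = x) (hτσ : ∀ x : W, x.1 ∈ C → τ x = σ x) :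
    ∃ σ' : X → Z, IsSectionOn p σ' (C ∪ W) ∧ EqOn σ' σ C ∧ ∀ x : W, σ' x = τ x := by
  classical
  set σ' : X → Z := fun x => if h : x ∈ W then τ ⟨x, h⟩ else σ x
  have hσ'W : ∀ x : W, σ' x = τ x := fun x => dif_pos x.2
  have hσ'C : EqOn σ' σ C := fun x hx => by
    by_cases h : x ∈ W
    · exact (hσ'W ⟨x, h⟩).trans (hτσ ⟨x, h⟩ hx)
    · exact dif_neg h
  refine ⟨σ', ⟨?_, ?_⟩, hσ'C, hσ'W⟩
  · refine (hσ.1.congr hσ'C).union_of_isClosed ?_ hC hW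
    rw [continuousOn_iff_continuous_domRestrict]
    exact (funext hσ'W : W.domRestrict σ' = τ) ▸ hτ
  · rintro x (hx | hx)
    · rw [hσ'C hx]; exact hσ.2 x hx
    · rw [hσ'W ⟨x, hx⟩]; exact hpτ ⟨x, hx⟩

theorem IsSectionOn.exists_section_of_trivialization {F : Type*} [TopologicalSpace F]
    {p : Z → X} {U W C : Set X} (φ : {z : Z // p z ∈ U} ≃ₜ U × F)
    (hφ : ∀ z, ((φ z).1 : X) = p z) (hWU : W ⊆ U)
    (hext : ∀ D : Set W, IsClosed D → ∀ g : D → F, Continuous g →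
      ∃ g' : W → F, Continuous g' ∧ ∀ d : D, g' d.1 = g d)
    {σ : X → Z} (hσ : IsSectionOn p σ C) (hC : IsClosed C) :
    ∃ τ : W → Z, Continuous τ ∧ (∀ x, p (τ x) = x) ∧ ∀ x : W, x.1 ∈ C → τ x = σ x := by
  have hσU : ∀ x : W, x.1 ∈ C → p (σ x) ∈ U := fun x hx => (hσ.2 x hx).symm ▸ hWU x.2
  set g : (Subtype.val ⁻¹' C : Set W) → F := fun x => (φ ⟨σ x, hσU x x.2⟩).2
  have hg : Continuous g := by
    refine (φ.continuous.comp (Continuous.subtype_mk ?_ _)).snd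
    exact hσ.1.comp_continuous (continuous_subtype_val.comp continuous_subtype_val) fun x => x.2
  obtain ⟨g', hg', hg'g⟩ := hext _ (hC.preimage continuous_subtype_val) g hg
  refine ⟨fun x => (φ.symm (⟨x, hWU x.2⟩, g' x)).1, ?_, fun x => ?_, fun x hx => ?_⟩
  · exact continuous_subtype_val.comp
      (φ.symm.continuous.comp ((continuous_subtype_val.subtype_mk _).prodMk hg'))
  · simpa using (hφ (φ.symm (⟨x, hWU x.2⟩, g' x))).symm
  · -- a point over `x` is determined by its fibre coordinate, which `g'` copies from `σ x`
    have : ((⟨x, hWU x.2⟩ : U), g' x) = φ ⟨σ x, hσU x hx⟩ :=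
      Prod.ext (Subtype.ext (by rw [hφ, hσ.2 x hx])) (hg'g ⟨x, hx⟩)
    simp only [this, Homeomorph.symm_apply_apply]

theorem IsSectionOn.exists_extend_union_of_trivialization {F : Type*} [TopologicalSpace F]
    {p : Z → X} {U W C : Set X} {σ : X → Z} (hσ : IsSectionOn p σ C) (hC : IsClosed C)
    (hW : IsClosed W) (φ : {z : Z // p z ∈ U} ≃ₜ U × F) (hφ : ∀ z, ((φ z).1 : X) = p z)
    (hWU : W ⊆ U)
    (hext : ∀ D : Set W, IsClosed D → ∀ g : D → F, Continuous g →
      ∃ g' : W → F, Continuous g' ∧ ∀ d : D, g' d.1 = g d) :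
    ∃ σ' : X → Z, IsSectionOn p σ' (C ∪ W) ∧ EqOn σ' σ C := by
  obtain ⟨τ, hτ, hpτ, hτσ⟩ := hσ.exists_section_of_trivialization φ hφ hWU hext hC
  obtain ⟨σ', hσ', hσ'σ, -⟩ := hσ.exists_extend_union hC hW hτ hpτ hτσ
  exact ⟨σ', hσ', hσ'σ⟩

structure PartialSection (p : Z → X) (A : Set X) {ι : Type*} (w : ι → Set X) where
  support : Set ι
  toFun : X → Z
  isSectionOn : IsSectionOn p toFun (A ∪ ⋃ i ∈ support, w i)

namespace PartialSection

variable {p : Z → X} {A : Set X} {ι : Type*} {w : ι → Set X}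

def domain (q : PartialSection p A w) : Set X := A ∪ ⋃ i ∈ q.support, w i

theorem subset_domain (q : PartialSection p A w) : A ⊆ q.domain := subset_union_left

theorem domain_mono {q q' : PartialSection p A w} (h : q.support ⊆ q'.support) :
    q.domain ⊆ q'.domain :=
  union_subset_union_right A (biUnion_mono h fun _ _ => subset_rfl)

instance : Preorder (PartialSection p A w) where
  le q q' := q.support ⊆ q'.support ∧ EqOn q'.toFun q.toFun q.domain
  le_refl q := ⟨subset_rfl, eqOn_refl _ _⟩
  le_trans _ _ _ h h' := ⟨h.1.trans h'.1, (h'.2.mono (domain_mono h.1)).trans h.2⟩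

theorem isClosed_domain (hA : IsClosed A) (hw : LocallyFinite w) (hwc : ∀ i, IsClosed (w i))
    (q : PartialSection p A w) : IsClosed q.domain := by
  refine hA.union ?_
  rw [biUnion_eq_iUnion]
  exact (hw.comp_injective Subtype.val_injective).isClosed_iUnion fun i => hwc i

theorem exists_le_mem_support (hA : IsClosed A) (hw : LocallyFinite w)
    (hwc : ∀ i, IsClosed (w i))
    (step : ∀ i C σ, IsClosed C → IsSectionOn p σ C →
      ∃ σ', IsSectionOn p σ' (C ∪ w i) ∧ EqOn σ' σ C)
    (q : PartialSection p A w) (i : ι) : ∃ q', q ≤ q' ∧ i ∈ q'.support := by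
  obtain ⟨σ', hσ', hσ'q⟩ := step i _ _ (q.isClosed_domain hA hw hwc) q.isSectionOn
  have hdom : A ∪ ⋃ j ∈ insert i q.support, w j = q.domain ∪ w i := by
    rw [biUnion_insert, domain]; ac_rfl
  exact ⟨⟨insert i q.support, σ', hdom ▸ hσ'⟩, ⟨subset_insert _ _, hσ'q⟩, mem_insert _ _⟩

theorem toFun_eq_of_isChain {c : Set (PartialSection p A w)} (hc : IsChain (· ≤ ·) c)
    {q q' : PartialSection p A w} (hq : q ∈ c) (hq' : q' ∈ c) {x : X} (hx : x ∈ q.domain)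
    (hx' : x ∈ q'.domain) : q.toFun x = q'.toFun x := by
  rcases hc.total hq hq' with h | h
  · exact (h.2 hx).symm
  · exact h.2 hx'

theorem bddAbove_of_isChain (hw : LocallyFinite w) {c : Set (PartialSection p A w)}
    (hc : IsChain (· ≤ ·) c) (hne : c.Nonempty) : BddAbove c := by
  classical
  obtain ⟨q₀, hq₀⟩ := hne
  set S := ⋃ q ∈ c, q.support
  set σ : X → Z := fun x => if h : ∃ q ∈ c, x ∈ q.domain then h.choose.toFun x else q₀.toFun x
  have hσ : ∀ q ∈ c, EqOn σ q.toFun q.domain := fun q hq x hx => by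
    have h : ∃ q ∈ c, x ∈ q.domain := ⟨q, hq, hx⟩
    simp only [σ, dif_pos h]
    exact toFun_eq_of_isChain hc h.choose_spec.1 hq h.choose_spec.2 hx
  have hcover : A ∪ ⋃ i ∈ S, w i ⊆ ⋃ q ∈ c, q.domain := by
    rintro x (hx | hx)
    · exact mem_biUnion hq₀ (subset_domain q₀ hx)
    · obtain ⟨i, hi, hxi⟩ := mem_iUnion₂.1 hx
      obtain ⟨q, hq, hiq⟩ := mem_iUnion₂.1 hi
      exact mem_biUnion hq (Or.inr (mem_biUnion hiq hxi))
  have hcont : ContinuousOn σ (A ∪ ⋃ i ∈ S, w i) := by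
    refine continuousOn_of_locally_continuousOn fun x _ => ?_
    obtain ⟨t, hto, hxt, q, hq, htq⟩ := hw.exists_isOpen_inter_biUnion_subset ⟨q₀, hq₀⟩
      (hc.directedOn.mono fun _ _ h => h.1) x
    refine ⟨t, hto, hxt, (q.isSectionOn.1.congr (hσ q hq)).mono ?_⟩
    rintro y ⟨hy | hy, hyt⟩
    · exact Or.inl hy
    · exact Or.inr (htq ⟨hyt, hy⟩)
  have hsec : ∀ x ∈ A ∪ ⋃ i ∈ S, w i, p (σ x) = x := fun x hx => by
    obtain ⟨q, hq, hxq⟩ := mem_iUnion₂.1 (hcover hx)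
    rw [hσ q hq hxq]
    exact q.isSectionOn.2 x hxq
  exact ⟨⟨S, σ, hcont, hsec⟩, fun q hq => ⟨subset_biUnion_of_mem hq, hσ q hq⟩⟩

end PartialSection

theorem IsSectionOn.exists_extend_univ_of_locallyFinite {p : Z → X} {ι : Type*}
    {w : ι → Set X} (hw : LocallyFinite w) (hwc : ∀ i, IsClosed (w i)) (hcov : ⋃ i, w i = univ)
    {A : Set X} (hA : IsClosed A) {σ₀ : X → Z} (hσ₀ : IsSectionOn p σ₀ A)
    (step : ∀ i C σ, IsClosed C → IsSectionOn p σ C →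
      ∃ σ', IsSectionOn p σ' (C ∪ w i) ∧ EqOn σ' σ C) :
    ∃ σ : X → Z, IsSectionOn p σ univ ∧ EqOn σ σ₀ A := by
  let q₀ : PartialSection p A w := ⟨∅, σ₀, by simpa using hσ₀⟩
  obtain ⟨m, hq₀m, hm⟩ := zorn_le_nonempty_Ici₀ q₀
    (fun c _ hc _ hq => PartialSection.bddAbove_of_isChain hw hc ⟨_, hq⟩) q₀ le_rfl
  have hdom : m.domain = univ := by
    refine eq_univ_of_forall fun x => ?_
    obtain ⟨i, hxi⟩ := mem_iUnion.1 (hcov ▸ mem_univ x)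
    obtain ⟨q, hmq, hiq⟩ := m.exists_le_mem_support hA hw hwc step i
    exact Or.inr (mem_biUnion ((hm hmq).1 hiq) hxi)
  exact ⟨m.toFun, hdom ▸ m.isSectionOn, hq₀m.2.mono q₀.subset_domain⟩

end

theorem stmt_13_general {X Z F : Type*} [TopologicalSpace X] [T2Space X] [ParacompactSpace X]
    [TopologicalSpace Z] [TopologicalSpace F]
    (p : Z → X)
    (htriv : ∀ x : X, ∃ U : Set X, IsOpen U ∧ x ∈ U ∧
      ∃ φ : {z : Z // p z ∈ U} ≃ₜ U × F, ∀ z : {z : Z // p z ∈ U}, ((φ z).1 : X) = p z)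
    (hAE : ∀ C : Set X, IsClosed C → ∀ D : Set C, IsClosed D →
      ∀ g : D → F, Continuous g → ∃ g' : C → F, Continuous g' ∧ ∀ d : D, g' d.1 = g d)
    (A : Set X) (hA : IsClosed A)
    (s : A → Z) (hs : Continuous s) (hsec : ∀ a : A, p (s a) = a.1) :
    ∃ S : X → Z, Continuous S ∧ (∀ x, p (S x) = x) ∧ ∀ a : A, S a.1 = s a := by
  rcases isEmpty_or_nonempty X with hX | ⟨⟨x₀⟩⟩
  · exact ⟨isEmptyElim, continuous_of_discreteTopology, isEmptyElim, fun a => isEmptyElim a.1⟩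
  choose U hUo hxU φ hφ using htriv
  -- `Z` is nonempty (the empty map into `F` extends over `X`), so `s` extends to a map `X → Z`
  obtain ⟨f₀, -⟩ := hAE univ isClosed_univ ∅ isClosed_empty isEmptyElim
    continuous_of_discreteTopology
  obtain ⟨σ₀, hσ₀, -, hσ₀s⟩ := IsSectionOn.exists_extend_union (W := A)
    (σ := fun _ => (φ x₀ |>.symm (⟨x₀, hxU x₀⟩, f₀ ⟨x₀, trivial⟩)).1)
    ⟨continuousOn_empty _, fun _ => False.elim⟩ isClosed_empty hA hs hsec (fun _ => False.elim)
  rw [empty_union] at hσ₀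
  obtain ⟨w, hwlf, hwc, hwU, hwcov⟩ :=
    exists_locallyFinite_closed_refinement hUo (iUnion_eq_univ_iff.2 fun x => ⟨x, hxU x⟩)
  obtain ⟨S, hS, hSσ₀⟩ := IsSectionOn.exists_extend_univ_of_locallyFinite hwlf hwc hwcov hA
    hσ₀ fun i _ _ hC hσ => hσ.exists_extend_union_of_trivialization hC (hwc i) (φ i) (hφ i)
      (hwU i) (hAE _ (hwc i))
  exact ⟨S, continuousOn_univ.1 hS.1, fun x => hS.2 x trivial,
    fun a => (hSσ₀ a.2).trans (hσ₀s a)⟩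

theorem stmt_13 {X Z F : Type*} [TopologicalSpace X] [T2Space X] [ParacompactSpace X]
    [TopologicalSpace Z] [TopologicalSpace F]
    (p : Z → X) (hp : Continuous p)
    (htriv : ∀ x : X, ∃ U : Set X, IsOpen U ∧ x ∈ U ∧
      ∃ φ : {z : Z // p z ∈ U} ≃ₜ U × F, ∀ z : {z : Z // p z ∈ U}, ((φ z).1 : X) = p z)
    (hAE : ∀ C : Set X, IsClosed C → ∀ D : Set C, IsClosed D →
      ∀ g : D → F, Continuous g → ∃ g' : C → F, Continuous g' ∧ ∀ d : D, g' d.1 = g d)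
    (A : Set X) (hA : IsClosed A)
    (s : A → Z) (hs : Continuous s) (hsec : ∀ a : A, p (s a) = a.1) :
    ∃ S : X → Z, Continuous S ∧ (∀ x, p (S x) = x) ∧ ∀ a : A, S a.1 = s a :=
  stmt_13_general p htriv hAE A hA s hs hsec
end

section
/- Let B be a hereditarily paracompact Hausdorff space and p : X → B × [0,1] a map such that every point (y,t) ∈ B × [0,1] has a neighborhood U × [a,b] over which p is trivial in the sense that p^{-1}(U × [a,b]) is homeomorphic over the identity of U × [a,b] to p^{-1}(U × {a}) × [a,b], restricting to the identity over U × {a}. Then every y ∈ B has a neighborhood U such that p^{-1}(U × [0,1]) is homeomorphic over id_{U×[0,1]} to p^{-1}(U × {0}) × [0,1], restricting to the identity over U × {0}. -/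
open unitInterval

/-- The tube `p⁻¹(U × [a,b])`. -/
def tubeSet {X B : Type*} (p : X → B × unitInterval) (U : Set B) (a b : unitInterval) :
    Set X :=
  {x | (p x).1 ∈ U ∧ (p x).2 ∈ Set.Icc a b}

/-- The slice `p⁻¹(U × {a})`. -/
def sliceSet {X B : Type*} (p : X → B × unitInterval) (U : Set B) (a : unitInterval) :
    Set X :=
  {x | (p x).1 ∈ U ∧ (p x).2 = a}

/-- `p` is trivial over `U × [a,b]`: there is a homeomorphism
`p⁻¹(U × [a,b]) ≅ p⁻¹(U × {a}) × [a,b]` over the identity of `U × [a,b]`,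
restricting to the identity over `U × {a}`. -/
def TrivOn {X B : Type*} [TopologicalSpace X] [TopologicalSpace B]
    (p : X → B × unitInterval) (U : Set B) (a b : unitInterval) : Prop :=
  ∃ φ : (tubeSet p U a b) ≃ₜ (sliceSet p U a) × (Set.Icc a b),
    (∀ x : tubeSet p U a b,
      (p ((φ x).1 : X)).1 = (p (x : X)).1 ∧ ((φ x).2 : unitInterval) = (p (x : X)).2) ∧
    (∀ x : tubeSet p U a b, (p (x : X)).2 = a → ((φ x).1 : X) = (x : X))

/-!
A trivialization over `U × [a,b]` and one over `U × [b,c]` concatenate to one over `U × [a,c]`: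
above level `b`, first retract to the slice at `b`, then to the slice at `a`. Trivializations
also restrict to smaller `U` and to subintervals. By the Lebesgue number lemma there is a
subdivision `0 = t₀ ≤ t₁ ≤ ⋯ ≤ t_N = 1` each of whose steps lies in the interval of one of the
local trivializations given at the points of `{y} × [0,1]`; intersecting the finitely many
corresponding neighborhoods of `y` and concatenating the restricted trivializations gives one
over `U × [0,1]`.
-/

lemma continuousOn_if_le {α β δ : Type*} [TopologicalSpace α] [TopologicalSpace β]
    [LinearOrder δ] [TopologicalSpace δ] [OrderClosedTopology δ] {f g : α → β} {q : α → δ}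
    {s : Set α} (hq : Continuous q) (b : δ) (hf : ContinuousOn f (s ∩ {x | q x ≤ b}))
    (hg : ContinuousOn g (s ∩ {x | b ≤ q x}))
    (hfg : ∀ x ∈ s, q x = b → f x = g x) :
    ContinuousOn (fun x => if q x ≤ b then f x else g x) s := by
  rw [continuousOn_iff_continuous_domRestrict]
  exact continuous_if_le (hq.comp continuous_subtype_val) continuous_const
    (hf.comp continuous_subtype_val.continuousOn fun x hx => ⟨x.2, hx⟩)
    (hg.comp continuous_subtype_val.continuousOn fun x hx => ⟨x.2, hx⟩)
    fun x hx => hfg x x.2 hx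

section

variable {X B : Type*} {p : X → B × I} {U V : Set B} {a b c : I}

lemma sliceSet_subset_tubeSet {t : I} (ht : t ∈ Set.Icc a b) :
    sliceSet p U t ⊆ tubeSet p U a b := fun _ hx => ⟨hx.1, hx.2 ▸ ht⟩

lemma tubeSet_mono {a' b' : I} (hVU : V ⊆ U) (h : Set.Icc a' b' ⊆ Set.Icc a b) :
    tubeSet p V a' b' ⊆ tubeSet p U a b := fun _ hx => ⟨hVU hx.1, h hx.2⟩

lemma sliceSet_mono (hVU : V ⊆ U) : sliceSet p V a ⊆ sliceSet p U a :=
  fun _ hx => ⟨hVU hx.1, hx.2⟩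

variable [TopologicalSpace X]

/-- The homeomorphism of `TrivOn`, unbundled into total maps on `X`: `retract` is its first
component and `lift` its inverse. Total maps restrict and compose without subtype bookkeeping. -/
structure TubeTrivialization (p : X → B × I) (U : Set B) (a b : I) where
  retract : X → X
  lift : X × I → X
  continuousOn_retract : ContinuousOn retract (tubeSet p U a b)
  continuousOn_lift : ContinuousOn lift (sliceSet p U a ×ˢ Set.Icc a b)
  p_retract : ∀ x ∈ tubeSet p U a b, p (retract x) = ((p x).1, a)
  p_lift : ∀ z ∈ sliceSet p U a, ∀ t ∈ Set.Icc a b, p (lift (z, t)) = ((p z).1, t)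
  lift_retract : ∀ x ∈ tubeSet p U a b, lift (retract x, (p x).2) = x
  retract_lift : ∀ z ∈ sliceSet p U a, ∀ t ∈ Set.Icc a b, retract (lift (z, t)) = z
  retract_eq_self : ∀ x ∈ sliceSet p U a, retract x = x

namespace TubeTrivialization

variable (e : TubeTrivialization p U a b)

lemma retract_mem {x : X} (hx : x ∈ tubeSet p U a b) : e.retract x ∈ sliceSet p U a := by
  show (p _).1 ∈ U ∧ (p _).2 = a
  rw [e.p_retract x hx]
  exact ⟨hx.1, rfl⟩

lemma lift_mem_sliceSet {z : X} {t : I} (hz : z ∈ sliceSet p U a) (ht : t ∈ Set.Icc a b) :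
    e.lift (z, t) ∈ sliceSet p U t := by
  show (p _).1 ∈ U ∧ (p _).2 = t
  rw [e.p_lift z hz t ht]
  exact ⟨hz.1, rfl⟩

lemma lift_mem {z : X} {t : I} (hz : z ∈ sliceSet p U a) (ht : t ∈ Set.Icc a b) :
    e.lift (z, t) ∈ tubeSet p U a b :=
  sliceSet_subset_tubeSet ht (e.lift_mem_sliceSet hz ht)

lemma lift_retract_of_mem_sliceSet {x : X} {t : I} (ht : t ∈ Set.Icc a b)
    (hx : x ∈ sliceSet p U t) : e.lift (e.retract x, t) = x := by
  conv_lhs => rw [← hx.2]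
  exact e.lift_retract x (sliceSet_subset_tubeSet ht hx)

lemma lift_left (hab : a ≤ b) {z : X} (hz : z ∈ sliceSet p U a) : e.lift (z, a) = z := by
  conv_lhs => rw [← e.retract_eq_self z hz]
  exact e.lift_retract_of_mem_sliceSet ⟨le_rfl, hab⟩ hz

def refl (p : X → B × I) (U : Set B) (a : I) : TubeTrivialization p U a a where
  retract := id
  lift := Prod.fst
  continuousOn_retract := continuousOn_id
  continuousOn_lift := continuous_fst.continuousOn
  p_retract x hx := Prod.ext rfl (le_antisymm hx.2.2 hx.2.1)
  p_lift z hz t ht := by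
    rw [le_antisymm ht.2 ht.1, ← hz.2]
  lift_retract _ _ := rfl
  retract_lift z _ t _ := rfl
  retract_eq_self x _ := rfl

def restrict (hVU : V ⊆ U) : TubeTrivialization p V a b where
  retract := e.retract
  lift := e.lift
  continuousOn_retract := e.continuousOn_retract.mono (tubeSet_mono hVU subset_rfl)
  continuousOn_lift := e.continuousOn_lift.mono (Set.prod_mono (sliceSet_mono hVU) subset_rfl)
  p_retract x hx := e.p_retract x (tubeSet_mono hVU subset_rfl hx)
  p_lift z hz := e.p_lift z (sliceSet_mono hVU hz)
  lift_retract x hx := e.lift_retract x (tubeSet_mono hVU subset_rfl hx)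
  retract_lift z hz := e.retract_lift z (sliceSet_mono hVU hz)
  retract_eq_self x hx := e.retract_eq_self x (sliceSet_mono hVU hx)

def shrink {a' b' : I} (hsub : Set.Icc a' b' ⊆ Set.Icc a b) (ha' : a' ≤ b') :
    TubeTrivialization p U a' b' where
  retract x := e.lift (e.retract x, a')
  lift q := e.lift (e.retract q.1, q.2)
  continuousOn_retract :=
    e.continuousOn_lift.comp
      ((e.continuousOn_retract.mono (tubeSet_mono subset_rfl hsub)).prodMk continuousOn_const)
      fun x hx => ⟨e.retract_mem (tubeSet_mono subset_rfl hsub hx), hsub ⟨le_rfl, ha'⟩⟩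
  continuousOn_lift :=
    e.continuousOn_lift.comp
      ((e.continuousOn_retract.comp continuousOn_fst fun q hq =>
        sliceSet_subset_tubeSet (hsub ⟨le_rfl, ha'⟩) hq.1).prodMk continuousOn_snd)
      fun q hq =>
        ⟨e.retract_mem (sliceSet_subset_tubeSet (hsub ⟨le_rfl, ha'⟩) hq.1), hsub hq.2⟩
  p_retract x hx := by
    have hx' := tubeSet_mono subset_rfl hsub hx
    rw [e.p_lift _ (e.retract_mem hx') a' (hsub ⟨le_rfl, ha'⟩), e.p_retract x hx']
  p_lift z hz t ht := by
    have hz' := sliceSet_subset_tubeSet (hsub ⟨le_rfl, ha'⟩) hz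
    rw [e.p_lift _ (e.retract_mem hz') t (hsub ht), e.p_retract z hz']
  lift_retract x hx := by
    have hx' := tubeSet_mono subset_rfl hsub hx
    dsimp only
    rw [e.retract_lift _ (e.retract_mem hx') a' (hsub ⟨le_rfl, ha'⟩), e.lift_retract x hx']
  retract_lift z hz t ht := by
    have hz' := sliceSet_subset_tubeSet (hsub ⟨le_rfl, ha'⟩) hz
    dsimp only
    rw [e.retract_lift _ (e.retract_mem hz') t (hsub ht),
      e.lift_retract_of_mem_sliceSet (hsub ⟨le_rfl, ha'⟩) hz]
  retract_eq_self x hx := e.lift_retract_of_mem_sliceSet (hsub ⟨le_rfl, ha'⟩) hx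

noncomputable def trans (e' : TubeTrivialization p U b c) (hp : Continuous fun x => (p x).2)
    (hab : a ≤ b) : TubeTrivialization p U a c where
  retract x := if (p x).2 ≤ b then e.retract x else e.retract (e'.retract x)
  lift q := if q.2 ≤ b then e.lift q else e'.lift (e.lift (q.1, b), q.2)
  continuousOn_retract := by
    refine continuousOn_if_le hp b
      (e.continuousOn_retract.mono fun x hx => ⟨hx.1.1, hx.1.2.1, hx.2⟩)
      (e.continuousOn_retract.comp
        (e'.continuousOn_retract.mono fun x hx => ⟨hx.1.1, hx.2, hx.1.2.2⟩) fun x hx =>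
          sliceSet_subset_tubeSet ⟨hab, le_rfl⟩ (e'.retract_mem ⟨hx.1.1, hx.2, hx.1.2.2⟩))
      fun x hx hxb => ?_
    rw [e'.retract_eq_self x ⟨hx.1, hxb⟩]
  continuousOn_lift := by
    refine continuousOn_if_le continuous_snd b
      (e.continuousOn_lift.mono fun q hq => ⟨hq.1.1, hq.1.2.1, hq.2⟩)
      (e'.continuousOn_lift.comp
        ((e.continuousOn_lift.comp (continuousOn_fst.prodMk continuousOn_const)
          fun q hq => ⟨hq.1.1, hab, le_rfl⟩).prodMk continuousOn_snd)
        fun q hq => ⟨e.lift_mem_sliceSet hq.1.1 ⟨hab, le_rfl⟩, hq.2, hq.1.2.2⟩)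
      fun q hq hqb => ?_
    obtain ⟨z, t⟩ := q
    dsimp only at hqb ⊢
    subst hqb
    rw [e'.lift_left hq.2.2 (e.lift_mem_sliceSet hq.1 ⟨hab, le_rfl⟩)]
  p_retract x hx := by
    split_ifs with h
    · exact e.p_retract x ⟨hx.1, hx.2.1, h⟩
    · have hx₂ : x ∈ tubeSet p U b c := ⟨hx.1, le_of_not_ge h, hx.2.2⟩
      rw [e.p_retract _ (sliceSet_subset_tubeSet ⟨hab, le_rfl⟩ (e'.retract_mem hx₂)),
        e'.p_retract x hx₂]
  p_lift z hz t ht := by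
    dsimp only
    split_ifs with h
    · exact e.p_lift z hz t ⟨ht.1, h⟩
    · rw [e'.p_lift _ (e.lift_mem_sliceSet hz ⟨hab, le_rfl⟩) t ⟨le_of_not_ge h, ht.2⟩,
        e.p_lift z hz b ⟨hab, le_rfl⟩]
  lift_retract x hx := by
    dsimp only
    by_cases h : (p x).2 ≤ b
    · rw [if_pos h, if_pos h, e.lift_retract x ⟨hx.1, hx.2.1, h⟩]
    · have hx₂ : x ∈ tubeSet p U b c := ⟨hx.1, le_of_not_ge h, hx.2.2⟩
      rw [if_neg h, if_neg h,
        e.lift_retract_of_mem_sliceSet ⟨hab, le_rfl⟩ (e'.retract_mem hx₂), e'.lift_retract x hx₂]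
  retract_lift z hz t ht := by
    dsimp only
    by_cases h : t ≤ b
    · rw [if_pos h, e.p_lift z hz t ⟨ht.1, h⟩, if_pos h, e.retract_lift z hz t ⟨ht.1, h⟩]
    · have hw := e.lift_mem_sliceSet hz ⟨hab, le_rfl⟩
      rw [if_neg h, e'.p_lift _ hw t ⟨le_of_not_ge h, ht.2⟩, if_neg h,
        e'.retract_lift _ hw t ⟨le_of_not_ge h, ht.2⟩, e.retract_lift z hz b ⟨hab, le_rfl⟩]
  retract_eq_self x hx := by
    have h : (p x).2 ≤ b := hx.2 ▸ hab
    rw [if_pos h, e.retract_eq_self x hx]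

end TubeTrivialization

variable [TopologicalSpace B]

theorem TubeTrivialization.trivOn (hp : Continuous fun x => (p x).2)
    (e : TubeTrivialization p U a b) : TrivOn p U a b := by
  refine ⟨{ toFun := fun x => (⟨e.retract x, e.retract_mem x.2⟩, ⟨(p x).2, x.2.2⟩)
            invFun := fun q => ⟨e.lift (q.1, q.2), e.lift_mem q.1.2 q.2.2⟩
            left_inv := fun x => Subtype.ext (e.lift_retract x x.2)
            right_inv := fun q => Prod.ext (Subtype.ext (e.retract_lift q.1 q.1.2 q.2 q.2.2))
              (Subtype.ext (by simp only [e.p_lift q.1 q.1.2 q.2 q.2.2]))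
            continuous_toFun := ?_
            continuous_invFun := ?_ },
    fun x => ?_, fun x hx => e.retract_eq_self x ⟨x.2.1, hx⟩⟩
  · exact (e.continuousOn_retract.domRestrict.subtype_mk _).prodMk
      ((hp.comp continuous_subtype_val).subtype_mk _)
  · refine Continuous.subtype_mk ?_ _
    exact e.continuousOn_lift.comp_continuous
      (continuous_subtype_val.prodMap continuous_subtype_val) fun q => ⟨q.1.2, q.2.2⟩
  · show (p (e.retract x)).1 = (p x).1 ∧ (p x).2 = (p x).2
    rw [e.p_retract x x.2]
    exact ⟨rfl, rfl⟩

theorem TrivOn.nonempty_tubeTrivialization (h : TrivOn p U a b) :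
    Nonempty (TubeTrivialization p U a b) := by
  classical
  obtain ⟨φ, hφ, hφa⟩ := h
  have p_symm : ∀ q, p (φ.symm q : X) = ((p (q.1 : X)).1, (q.2 : I)) := fun q => by
    have h := hφ (φ.symm q)
    rw [φ.apply_symm_apply] at h
    exact Prod.ext h.1.symm h.2.symm
  refine ⟨{ retract := fun x => if hx : x ∈ tubeSet p U a b then ((φ ⟨x, hx⟩).1 : X) else x
            lift := fun q => if hq : q ∈ sliceSet p U a ×ˢ Set.Icc a b
              then (φ.symm (⟨q.1, hq.1⟩, ⟨q.2, hq.2⟩) : X) else q.1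
            continuousOn_retract := ?_
            continuousOn_lift := ?_
            p_retract := fun x hx => ?_
            p_lift := fun z hz t ht => ?_
            lift_retract := fun x hx => ?_
            retract_lift := fun z hz t ht => ?_
            retract_eq_self := fun x hx => ?_ }⟩
  · rw [continuousOn_iff_continuous_domRestrict]
    convert (continuous_subtype_val.comp (continuous_fst.comp φ.continuous)) using 1
    exact funext fun x => dif_pos x.2
  · rw [continuousOn_iff_continuous_domRestrict]
    convert continuous_subtype_val.comp (φ.symm.continuous.comp
      (((continuous_fst.comp continuous_subtype_val).subtype_mk
          fun q : ↥(sliceSet p U a ×ˢ Set.Icc a b) => q.2.1).prodMk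
        ((continuous_snd.comp continuous_subtype_val).subtype_mk
          fun q : ↥(sliceSet p U a ×ˢ Set.Icc a b) => q.2.2))) using 1
    exact funext fun q => dif_pos q.2
  · rw [dif_pos hx]
    exact Prod.ext (hφ _).1 (φ _).1.2.2
  · rw [dif_pos (show (z, t) ∈ sliceSet p U a ×ˢ Set.Icc a b from ⟨hz, ht⟩), p_symm]
  · have hφx : ((φ ⟨x, hx⟩).1, (⟨(p x).2, hx.2⟩ : Set.Icc a b)) = φ ⟨x, hx⟩ :=
      Prod.ext rfl (Subtype.ext (hφ ⟨x, hx⟩).2.symm)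
    simp only [dif_pos hx]
    rw [dif_pos (show (_, _) ∈ sliceSet p U a ×ˢ Set.Icc a b
      from ⟨(φ ⟨x, hx⟩).1.2, hx.2⟩)]
    simp only [hφx, Homeomorph.symm_apply_apply]
  · rw [dif_pos (show (z, t) ∈ sliceSet p U a ×ˢ Set.Icc a b from ⟨hz, ht⟩)]
    simp only [Subtype.coe_eta, Homeomorph.apply_symm_apply, dif_pos (φ.symm _).2]
  · by_cases hx' : x ∈ tubeSet p U a b
    · rw [dif_pos hx']
      exact hφa _ hx.2
    · rw [dif_neg hx']

end

theorem stmt_17_general {X B : Type*} [TopologicalSpace X] [TopologicalSpace B]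
    (p : X → B × unitInterval) (hp : Continuous p)
    (hloc : ∀ (y : B) (t : unitInterval), ∃ U ∈ nhds y, ∃ a b : unitInterval,
      t ∈ Set.Icc a b ∧ Set.Icc a b ∈ nhds t ∧ TrivOn p U a b) :
    ∀ y : B, ∃ U ∈ nhds y, TrivOn p U 0 1 := by
  intro y
  choose U hU a b _ hnhds htriv using hloc y
  obtain ⟨f, hf0, hf_mono, ⟨N, hfN⟩, hf_sub⟩ :=
    exists_monotone_Icc_subset_open_cover_unitInterval (fun _ => isOpen_interior)
      fun t _ => Set.mem_iUnion.2 ⟨t, mem_interior_iff_mem_nhds.2 (hnhds t)⟩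
  choose i hi using hf_sub
  set V := ⋂ k ∈ Finset.range N, U (i k)
  have hV_sub : ∀ n < N, V ⊆ U (i n) := fun n hn =>
    Set.biInter_subset_of_mem (Finset.mem_range.2 hn)
  have hV_triv : ∀ n ≤ N, Nonempty (TubeTrivialization p V 0 (f n)) := by
    intro n
    induction n with
    | zero => exact fun _ => hf0 ▸ ⟨.refl p V (f 0)⟩
    | succ n ih =>
      intro hn
      obtain ⟨e⟩ := ih (n.le_succ.trans hn)
      obtain ⟨e'⟩ := (htriv (i n)).nonempty_tubeTrivialization
      exact ⟨e.trans ((e'.restrict (hV_sub n hn)).shrink ((hi n).trans interior_subset)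
        (hf_mono n.le_succ)) hp.snd (f n).2.1⟩
  obtain ⟨e⟩ := hV_triv N le_rfl
  refine ⟨V, (Filter.biInter_finset_mem _).2 fun k _ => hU (i k), ?_⟩
  rw [← hfN N le_rfl]
  exact e.trivOn hp.snd

theorem stmt_17 {X B : Type*} [TopologicalSpace X] [TopologicalSpace B] [T2Space B]
    (hhered : ∀ s : Set B, ParacompactSpace s)
    (p : X → B × unitInterval) (hp : Continuous p)
    (hloc : ∀ (y : B) (t : unitInterval), ∃ U ∈ nhds y, ∃ a b : unitInterval,
      t ∈ Set.Icc a b ∧ Set.Icc a b ∈ nhds t ∧ TrivOn p U a b) :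
    ∀ y : B, ∃ U ∈ nhds y, TrivOn p U 0 1 :=
  stmt_17_general p hp hloc
end

section
/- Let U and V be open subsets of a normal topological space B, and suppose C₀ and C₁ are disjoint closed subsets of U ∪ V with V − U ⊆ C₀ and U − V ⊆ C₁, and f : U ∪ V → [0,1] a continuous map with f(C₀) = {0} and f(C₁) = {1}. Given homeomorphisms φ over U and ψ over V of a space over (U∪V) × [0,1] as in a clutching situation, the map defined piecewise as φ on U − V, as the f-interpolated twist δ ∘ ψ on U ∩ V, and as ψ on V − U is continuous, provided δ agrees with the identity where f = 0 and with φ ∘ ψ^{-1} where f = 1. -/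
theorem stmt_19 {B X Z : Type*} [TopologicalSpace B] [NormalSpace B]
    [TopologicalSpace X] [TopologicalSpace Z]
    (U V : Set B) (hU : IsOpen U) (hV : IsOpen V)
    (C₀ C₁ : Set ↥(U ∪ V)) (hC₀ : IsClosed C₀) (hC₁ : IsClosed C₁)
    (hC : Disjoint C₀ C₁)
    (hC₀nbhd : {w : ↥(U ∪ V) | (w : B) ∈ V ∧ (w : B) ∉ U} ⊆ interior C₀)
    (hC₁nbhd : {w : ↥(U ∪ V) | (w : B) ∈ U ∧ (w : B) ∉ V} ⊆ interior C₁)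
    (f : ↥(U ∪ V) → ℝ) (hf : Continuous f)
    (hf0 : ∀ w ∈ C₀, f w = 0) (hf1 : ∀ w ∈ C₁, f w = 1)
    (q : X → ↥(U ∪ V)) (hq : Continuous q)
    (gU : {x : X // (q x : B) ∈ U} → Z) (hgU : Continuous gU)
    (gV : {x : X // (q x : B) ∈ V} → Z) (hgV : Continuous gV)
    (gM : {x : X // (q x : B) ∈ U ∧ (q x : B) ∈ V} → Z) (hgM : Continuous gM)
    (hagree0 : ∀ (x : X) (hx : (q x : B) ∈ U ∧ (q x : B) ∈ V),
      f (q x) = 0 → gM ⟨x, hx⟩ = gV ⟨x, hx.2⟩)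
    (hagree1 : ∀ (x : X) (hx : (q x : B) ∈ U ∧ (q x : B) ∈ V),
      f (q x) = 1 → gM ⟨x, hx⟩ = gU ⟨x, hx.1⟩)
    (Θ : X → Z)
    (hΘU : ∀ (x : X) (hx : (q x : B) ∈ U), (q x : B) ∉ V → Θ x = gU ⟨x, hx⟩)
    (hΘM : ∀ (x : X) (hx : (q x : B) ∈ U ∧ (q x : B) ∈ V), Θ x = gM ⟨x, hx⟩)
    (hΘV : ∀ (x : X) (hx : (q x : B) ∈ V), (q x : B) ∉ U → Θ x = gV ⟨x, hx⟩) :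
    Continuous Θ := by
  -- membership in C₀ forces the point to lie over V, and C₁ over U
  have hC₀V : ∀ w ∈ C₀, (w : B) ∈ V := by
    intro w hw
    by_contra hwv
    have hwU : (w : B) ∈ U := w.2.resolve_right hwv
    have : w ∈ C₁ := interior_subset (hC₁nbhd ⟨hwU, hwv⟩)
    exact hC.ne_of_mem hw this rfl
  have hC₁U : ∀ w ∈ C₁, (w : B) ∈ U := by
    intro w hw
    by_contra hwu
    have hwV : (w : B) ∈ V := w.2.resolve_left hwu
    have : w ∈ C₀ := interior_subset (hC₀nbhd ⟨hwV, hwu⟩)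
    exact hC.ne_of_mem this hw rfl
  set T₀ : Set X := q ⁻¹' (interior C₀) with hT₀def
  set T₁ : Set X := q ⁻¹' (interior C₁) with hT₁def
  set TM : Set X := {x : X | (q x : B) ∈ U ∧ (q x : B) ∈ V} with hTMdef
  have hT₀open : IsOpen T₀ := isOpen_interior.preimage hq
  have hT₁open : IsOpen T₁ := isOpen_interior.preimage hq
  have hTMopen : IsOpen TM := by
    have : TM = q ⁻¹' (Subtype.val ⁻¹' (U ∩ V)) := rfl
    rw [this]
    exact (((hU.inter hV).preimage continuous_subtype_val).preimage hq)
  -- ContinuousOn each piece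
  have hcont₀ : ContinuousOn Θ T₀ := by
    rw [continuousOn_iff_continuous_restrict]
    have key : T₀.domRestrict Θ = fun x : T₀ =>
        gV ⟨x.1, hC₀V _ (interior_subset x.2)⟩ := by
      funext x
      obtain ⟨x, hx⟩ := x
      have hxC₀ : q x ∈ C₀ := interior_subset hx
      have hxV : (q x : B) ∈ V := hC₀V _ hxC₀
      by_cases hxU : (q x : B) ∈ U
      · have := hΘM x ⟨hxU, hxV⟩
        simp only [Set.domRestrict_apply, this, hagree0 x ⟨hxU, hxV⟩ (hf0 _ hxC₀)]
      · exact hΘV x hxV hxU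
    rw [key]
    exact hgV.comp (Continuous.subtype_mk continuous_subtype_val _)
  have hcont₁ : ContinuousOn Θ T₁ := by
    rw [continuousOn_iff_continuous_restrict]
    have key : T₁.domRestrict Θ = fun x : T₁ =>
        gU ⟨x.1, hC₁U _ (interior_subset x.2)⟩ := by
      funext x
      obtain ⟨x, hx⟩ := x
      have hxC₁ : q x ∈ C₁ := interior_subset hx
      have hxU : (q x : B) ∈ U := hC₁U _ hxC₁
      by_cases hxV : (q x : B) ∈ V
      · have := hΘM x ⟨hxU, hxV⟩
        simp only [Set.domRestrict_apply, this, hagree1 x ⟨hxU, hxV⟩ (hf1 _ hxC₁)]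
      · exact hΘU x hxU hxV
    rw [key]
    exact hgU.comp (Continuous.subtype_mk continuous_subtype_val _)
  have hcontM : ContinuousOn Θ TM := by
    rw [continuousOn_iff_continuous_restrict]
    have key : TM.domRestrict Θ = fun x : TM => gM ⟨x.1, x.2⟩ := by
      funext x
      exact hΘM x.1 x.2
    rw [key]
    exact hgM.comp (Continuous.subtype_mk continuous_subtype_val _)
  rw [continuous_iff_continuousAt]
  intro x
  by_cases hxU : (q x : B) ∈ U
  · by_cases hxV : (q x : B) ∈ V
    · exact hcontM.continuousAt (hTMopen.mem_nhds ⟨hxU, hxV⟩)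
    · exact hcont₁.continuousAt (hT₁open.mem_nhds (hC₁nbhd ⟨hxU, hxV⟩))
  · have hxV : (q x : B) ∈ V := (q x).2.resolve_left hxU
    exact hcont₀.continuousAt (hT₀open.mem_nhds (hC₀nbhd ⟨hxV, hxU⟩))
end
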